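/- arXiv:2302.13037 — 2 statements merged into one kernel-verified Lean document; each statement's English description precedes it below -/
import Mathlib

section
/- Let A and B be nonempty disjoint compact convex subsets of ℝ². Then there exists a nonempty open set O ⊆ S¹ of directions z such that for every z ∈ O, the orthogonal projections of A and B onto the line z^⊥ are disjoint: proj_z(A) ∩ proj_z(B) = ∅. -/
/-!
Separate the compact convex set `A - B` from the origin by a functional `f > u > 0`. If `A - B`
lies in the ball of radius `M`, a point `t • z` of it with `‖z‖ = 1` has `|t| ≤ M`, hence
`f (t • z) ≤ M * |f z|`; so every unit direction with `|f z| < u / M` misses `A - B`, i.e. the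
projections along `z` of `A` and `B` are disjoint. These directions form an open subset of the
circle, nonempty because `f` vanishes on a unit vector of its kernel.
-/

open Metric Set Pointwise

noncomputable abbrev E2 := EuclideanSpace ℝ (Fin 2)

theorem IsCompact.sub {G : Type*} [SubtractionMonoid G] [TopologicalSpace G]
    [ContinuousAdd G] [ContinuousNeg G] {A B : Set G} (hA : IsCompact A) (hB : IsCompact B) :
    IsCompact (A - B) := by
  simpa [sub_eq_add_neg] using hA.add hB.neg

section Normed

variable {E : Type*} [NormedAddCommGroup E] [NormedSpace ℝ E]

theorem exists_dual_forall_disjoint_span_of_abs_lt {D : Set E} (hDc : IsCompact D)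
    (hDconv : Convex ℝ D) (h0 : (0 : E) ∉ D) :
    ∃ (f : StrongDual ℝ E) (ε : ℝ), 0 < ε ∧
      ∀ z ∈ sphere (0 : E) 1, |f z| < ε → Disjoint D (ℝ ∙ z : Set E) := by
  obtain ⟨f, u, hf0, hfD⟩ := geometric_hahn_banach_point_closed hDconv hDc.isClosed h0
  rw [map_zero] at hf0
  obtain ⟨M, hM, hDM⟩ := hDc.isBounded.exists_pos_norm_le
  refine ⟨f, u / M, div_pos hf0 hM, fun z hz hfz => disjoint_left.2 ?_⟩
  intro x hD hx
  obtain ⟨t, rfl⟩ := Submodule.mem_span_singleton.1 hx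
  have ht : |t| ≤ M := by simpa [norm_smul, mem_sphere_zero_iff_norm.1 hz] using hDM _ hD
  refine (hfD _ hD).not_gt ?_
  calc f (t • z) = t * f z := by simp
    _ ≤ |t| * |f z| := by rw [← abs_mul]; exact le_abs_self _
    _ ≤ M * |f z| := by gcongr
    _ < u := by rwa [lt_div_iff₀' hM] at hfz

theorem exists_mem_sphere_apply_eq_zero [FiniteDimensional ℝ E] (hE : 1 < Module.finrank ℝ E)
    (f : E →ₗ[ℝ] ℝ) : ∃ z ∈ sphere (0 : E) 1, f z = 0 := by
  obtain ⟨w, hw, hw0⟩ := Submodule.exists_mem_ne_zero_of_ne_bot <|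
    f.ker_ne_bot_of_finrank_lt (by rwa [Module.finrank_self])
  refine ⟨‖w‖⁻¹ • w, mem_sphere_zero_iff_norm.2 (norm_smul_inv_norm hw0), ?_⟩
  rw [map_smul, LinearMap.mem_ker.1 hw, smul_zero]

end Normed

section InnerProduct

variable {E : Type*} [NormedAddCommGroup E] [InnerProductSpace ℝ E]

theorem Submodule.orthogonalProjectionOnto_eq_iff_sub_mem (K : Submodule ℝ E)
    [K.HasOrthogonalProjection] {x y : E} :
    K.orthogonalProjectionOnto x = K.orthogonalProjectionOnto y ↔ x - y ∈ Kᗮ := by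
  rw [← sub_eq_zero, ← map_sub, orthogonalProjectionOnto_eq_zero_iff]

theorem disjoint_image_orthogonalProjectionOnto_iff (K : Submodule ℝ E)
    [K.HasOrthogonalProjection] {A B : Set E} :
    Disjoint ((fun x => (K.orthogonalProjectionOnto x : E)) '' A)
      ((fun x => (K.orthogonalProjectionOnto x : E)) '' B) ↔ Disjoint (A - B) (Kᗮ : Set E) := by
  simp only [disjoint_left, forall_mem_image, forall_mem_image2, ← image2_sub]
  simp only [mem_image, not_exists, not_and, SetLike.mem_coe, Subtype.coe_inj,
    K.orthogonalProjectionOnto_eq_iff_sub_mem, sub_mem_comm_iff]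

end InnerProduct

theorem exists_open_directions_separating_projections_general
    (A B : Set E2)
    (hAc : IsCompact A) (hBc : IsCompact B)
    (hAconv : Convex ℝ A) (hBconv : Convex ℝ B)
    (hdisj : Disjoint A B) :
    ∃ O : Set (Metric.sphere (0 : E2) 1), IsOpen O ∧ O.Nonempty ∧
      ∀ z ∈ O, Disjoint
        ((fun x => (Submodule.orthogonalProjectionOnto ((ℝ ∙ (z : E2))ᗮ) x : E2)) '' A)
        ((fun x => (Submodule.orthogonalProjectionOnto ((ℝ ∙ (z : E2))ᗮ) x : E2)) '' B) := by
  obtain ⟨f, ε, hε, hf⟩ := exists_dual_forall_disjoint_span_of_abs_lt (hAc.sub hBc)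
    (hAconv.sub hBconv) (zero_notMem_sub_iff.2 hdisj)
  obtain ⟨z₀, hz₀, hfz₀⟩ := exists_mem_sphere_apply_eq_zero (by simp) (f : E2 →ₗ[ℝ] ℝ)
  refine ⟨{z | |f z| < ε}, isOpen_lt (by fun_prop) continuous_const, ⟨⟨z₀, hz₀⟩, ?_⟩, ?_⟩
  · simpa [show f z₀ = 0 from hfz₀] using hε
  · intro z hz
    rw [disjoint_image_orthogonalProjectionOnto_iff, Submodule.orthogonal_orthogonal]
    exact hf z z.2 hz

theorem exists_open_directions_separating_projections
    (A B : Set E2) (hA : A.Nonempty) (hB : B.Nonempty)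
    (hAc : IsCompact A) (hBc : IsCompact B)
    (hAconv : Convex ℝ A) (hBconv : Convex ℝ B)
    (hdisj : Disjoint A B) :
    ∃ O : Set (Metric.sphere (0 : E2) 1), IsOpen O ∧ O.Nonempty ∧
      ∀ z ∈ O, Disjoint
        ((fun x => (Submodule.orthogonalProjectionOnto ((ℝ ∙ (z : E2))ᗮ) x : E2)) '' A)
        ((fun x => (Submodule.orthogonalProjectionOnto ((ℝ ∙ (z : E2))ᗮ) x : E2)) '' B) :=
  exists_open_directions_separating_projections_general A B hAc hBc hAconv hBconv hdisj
end

section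
/- Let A and B be disjoint convex subsets of ℝ², let C = { (a−b)/‖a−b‖ : a ∈ A, b ∈ B } be the set of unit vectors directing from B to A, and −C its antipodal set. Then C ∩ (−C) = ∅; that is, there are no points a₁,a₂ ∈ A and b₁,b₂ ∈ B with (a₁−b₁)/‖a₁−b₁‖ = (b₂−a₂)/‖b₂−a₂‖. -/
/-!
The difference set `A - B` is convex and, as `A` and `B` are disjoint, misses `0`. If the unit
vector from `b₁` to `a₁` were opposite to the one from `b₂` to `a₂`, then `a₁ - b₁` and
`a₂ - b₂` would be positive multiples of opposite vectors, so a convex combination of them,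
both points of `A - B`, would be `0`.
-/

open Pointwise

variable {E : Type*}

theorem Convex.smul_add_smul_ne_zero [AddCommGroup E] [Module ℝ E] {C : Set E}
    (hC : Convex ℝ C) (h0 : (0 : E) ∉ C) {x y : E} (hx : x ∈ C) (hy : y ∈ C) {p q : ℝ}
    (hp : 0 ≤ p) (hq : 0 ≤ q) (hpq : 0 < p + q) : p • x + q • y ≠ 0 := by
  intro hsum
  obtain ⟨z, hz, hcomb⟩ := hC.exists_mem_add_smul_eq hx hy hp hq
  rw [hsum, smul_eq_zero] at hcomb
  exact h0 (hcomb.resolve_left hpq.ne' ▸ hz)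

theorem Convex.not_sameRay_neg [AddCommGroup E] [Module ℝ E] {C : Set E}
    (hC : Convex ℝ C) (h0 : (0 : E) ∉ C) {x y : E} (hx : x ∈ C) (hy : y ∈ C) :
    ¬SameRay ℝ x (-y) := by
  intro hray
  have hx0 : x ≠ 0 := fun h => h0 (h ▸ hx)
  have hy0 : -y ≠ 0 := neg_ne_zero.mpr fun h => h0 (h ▸ hy)
  obtain ⟨p, q, hp, hq, hpq⟩ := hray.exists_pos hx0 hy0
  refine hC.smul_add_smul_ne_zero h0 hx hy hp.le hq.le (add_pos hp hq) ?_
  rw [hpq, smul_neg, neg_add_cancel]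

theorem Disjoint.inv_norm_smul_sub_ne_inv_norm_smul_sub [NormedAddCommGroup E] [NormedSpace ℝ E]
    {A B : Set E} (hA : Convex ℝ A) (hB : Convex ℝ B) (hAB : Disjoint A B)
    {a₁ a₂ b₁ b₂ : E} (ha₁ : a₁ ∈ A) (ha₂ : a₂ ∈ A) (hb₁ : b₁ ∈ B) (hb₂ : b₂ ∈ B) :
    ‖a₁ - b₁‖⁻¹ • (a₁ - b₁) ≠ ‖b₂ - a₂‖⁻¹ • (b₂ - a₂) := by
  intro h
  have hray : SameRay ℝ (a₁ - b₁) (-(a₂ - b₂)) := by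
    rw [neg_sub]
    exact sameRay_iff_inv_norm_smul_eq.mpr (.inr (.inr h))
  exact (hA.sub hB).not_sameRay_neg hAB.zero_notMem_sub_set
    (Set.sub_mem_sub ha₁ hb₁) (Set.sub_mem_sub ha₂ hb₂) hray

theorem direction_cone_antipodal_disjoint
    (A B : Set (EuclideanSpace ℝ (Fin 2)))
    (hAconv : Convex ℝ A) (hBconv : Convex ℝ B) (hdisj : Disjoint A B) :
    ∀ a₁ ∈ A, ∀ a₂ ∈ A, ∀ b₁ ∈ B, ∀ b₂ ∈ B,
      ‖a₁ - b₁‖⁻¹ • (a₁ - b₁) ≠ ‖b₂ - a₂‖⁻¹ • (b₂ - a₂) :=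
  fun _ ha₁ _ ha₂ _ hb₁ _ hb₂ =>
    hdisj.inv_norm_smul_sub_ne_inv_norm_smul_sub hAconv hBconv ha₁ ha₂ hb₁ hb₂
end
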